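/- arXiv:1806.00661 — 4 statements merged into one kernel-verified Lean document; each statement's English description precedes it below -/
import Mathlib

section
/- Let K ≥ 2. For a uniformly random pair (W, S) where S is a uniformly random 2-element subset of [K] and W is uniform on S, consider the protocol that outputs the singleton query Q = {W} with probability 1/K and Q = {the other index of S} with probability (K-1)/K. Then P(Q = {q} | W = W') = 1/K for all q, W' ∈ [K]. -/
lemma aux_sum_ne (K : ℕ) (a : Fin K) (c : ℝ) :
    (∑ x : Fin K, if a = x then (0:ℝ) else c) = ((K:ℝ) - 1) * c := by
  have h : ∀ x : Fin K, (if a = x then (0:ℝ) else c) = c - (if a = x then c else 0) := by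
    intro x; split <;> ring
  simp only [h, Finset.sum_sub_distrib, Finset.sum_const, Finset.card_univ,
    Fintype.card_fin, Finset.sum_ite_eq, Finset.mem_univ, if_true, nsmul_eq_mul]
  ring

/-- Case 1 privacy of the PIR-CSI--II protocol.
Model: the pair `(W, O)` (demand and the other element of the 2-subset `S = {W, O}`)
is uniform over ordered pairs of distinct indices, hence each pair has probability
`1/(K(K-1))`; given `(W, O)` the query is `{W}` with probability `1/K` (coin `true`)
and `{O}` with probability `(K-1)/K` (coin `false`).  Then for every `q` and `W'`,
`P(Q = {q} ∧ W = W') = (1/K)·P(W = W')`, i.e. `P(Q = {q} | W = W') = 1/K`. -/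
theorem stmt4 (K : ℕ) (hK : 2 ≤ K)
    (μ : Fin K × Fin K × Bool → ℝ)
    (hμ : ∀ w o b, μ (w, o, b) =
      if w = o then 0
      else (1 / ((K : ℝ) * ((K : ℝ) - 1))) *
        (if b then 1 / (K : ℝ) else ((K : ℝ) - 1) / K)) :
    ∀ q w' : Fin K,
      (∑ ω : Fin K × Fin K × Bool,
          if (if ω.2.2 then ω.1 else ω.2.1) = q ∧ ω.1 = w' then μ ω else 0)
        = (1 / (K : ℝ)) *
          (∑ ω : Fin K × Fin K × Bool, if ω.1 = w' then μ ω else 0) := by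
  intro q w'
  have hK2 : (2:ℝ) ≤ (K:ℝ) := by exact_mod_cast hK
  have hKne : (K:ℝ) ≠ 0 := by linarith
  have hK1 : (K:ℝ) - 1 ≠ 0 := by linarith
  simp only [Fintype.sum_prod_type, Fintype.sum_bool, hμ, if_true, Bool.false_eq_true, if_false,
    ite_and]
  simp only [Finset.sum_add_distrib, Finset.sum_ite_eq, Finset.sum_ite_eq', Finset.mem_univ,
    if_true, Finset.sum_const_zero, aux_sum_ne]
  simp only [Finset.sum_ite_irrel, Finset.sum_const_zero]
  simp only [Finset.sum_ite_eq', Finset.mem_univ, if_true, aux_sum_ne]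
  rcases eq_or_ne q w' with rfl | hq
  · simp only [if_pos rfl, if_true, add_zero]
    field_simp
    ring
  · rw [if_neg (fun h : w' = q => hq h.symm), if_neg hq]
    field_simp
    ring
end

section
/- Let A, Q, X_0, X_1, ..., X_{n-1}, Y_0, Y_1, ..., Y_{n-1} be discrete random variables such that for each i ∈ {0, ..., n-1}: H(X_i | A, Q, X_0, ..., X_{i-1}, Y_0, ..., Y_i) = 0 and X_i is independent of (Q, X_0, ..., X_{i-1}, Y_0, ..., Y_i). Then H(A) ≥ Σ_{i=0}^{n-1} H(X_i). -/
open scoped BigOperators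

/-- Probability that the discrete random variable `X` (on a finite probability
space with weights `μ`) takes the value `a`. -/
noncomputable def pr {Ω α : Type*} [Fintype Ω] (μ : Ω → ℝ) [DecidableEq α]
    (X : Ω → α) (a : α) : ℝ :=
  ∑ ω, if X ω = a then μ ω else 0

/-- Shannon entropy (in bits) of the discrete random variable `X`. -/
noncomputable def entH {Ω α : Type*} [Fintype Ω] [Fintype α] [DecidableEq α]
    (μ : Ω → ℝ) (X : Ω → α) : ℝ :=
  -∑ a, pr μ X a * Real.logb 2 (pr μ X a)

/-- Conditional Shannon entropy `H(X | Y) = H(X, Y) - H(Y)`. -/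
noncomputable def condH {Ω α β : Type*} [Fintype Ω] [Fintype α] [DecidableEq α]
    [Fintype β] [DecidableEq β] (μ : Ω → ℝ) (X : Ω → α) (Y : Ω → β) : ℝ :=
  entH μ (fun ω => (X ω, Y ω)) - entH μ Y

/-- `X` and `Y` are independent random variables. -/
def IndepRV {Ω α β : Type*} [Fintype Ω] [DecidableEq α] [DecidableEq β]
    (μ : Ω → ℝ) (X : Ω → α) (Y : Ω → β) : Prop :=
  ∀ a b, pr μ (fun ω => (X ω, Y ω)) (a, b) = pr μ X a * pr μ Y b

/-- `μ` is a probability mass function on the finite sample space `Ω`. -/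
def IsPMF {Ω : Type*} [Fintype Ω] (μ : Ω → ℝ) : Prop :=
  (∀ ω, 0 ≤ μ ω) ∧ ∑ ω, μ ω = 1

/-!
Entropies are written as averages over the sample space, `H(Z) = -∑ ω, μ ω log p_Z(Z ω)`, which
makes them invariant under injective relabelling and non-increasing under coarsening of `Z`; Gibbs'
inequality gives submodularity, so conditioning on a finer variable cannot increase conditional
entropy.

With `H_k = (Q, X_{<k}, Y_{<k})` and `W_k = (Q, X_{<k}, Y_{≤k})`, each step reads
`H(A | H_k) ≥ H(A | W_k) = H(X_k | W_k) - H(X_k | A, W_k) + H(A | X_k, W_k) = H(X_k) + H(A | H_{k+1})`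
by independence and recoverability; chaining from `H(A) ≥ H(A | H_0)` to `H(A | H_n) ≥ 0` gives
the bound.
-/

open Finset Real

lemma sum_mul_logb_div_nonpos {ι : Type*} [Fintype ι] {p q : ι → ℝ} (hp : ∀ i, 0 ≤ p i)
    (hq : ∀ i, 0 ≤ q i) (hpq : ∀ i, p i ≠ 0 → q i ≠ 0) (hsum : ∑ i, q i ≤ ∑ i, p i) :
    ∑ i, p i * logb 2 (q i / p i) ≤ 0 := by
  have hlog2 : 0 < log 2 := log_pos one_lt_two
  have key : ∀ i, p i * logb 2 (q i / p i) ≤ (q i - p i) / log 2 := by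
    intro i
    rcases (hp i).eq_or_lt with h0 | h0
    · rw [← h0]
      simpa using div_nonneg (hq i) hlog2.le
    · have hqi : 0 < q i := (hq i).lt_of_ne (hpq i h0.ne').symm
      have := log_le_sub_one_of_pos (div_pos hqi h0)
      rw [logb, ← mul_div_assoc]
      gcongr
      calc p i * log (q i / p i) ≤ p i * (q i / p i - 1) := by gcongr
        _ = q i - p i := by field_simp
  calc ∑ i, p i * logb 2 (q i / p i) ≤ ∑ i, (q i - p i) / log 2 := sum_le_sum fun i _ => key i
    _ = (∑ i, q i - ∑ i, p i) / log 2 := by rw [← sum_div, sum_sub_distrib]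
    _ ≤ 0 := div_nonpos_of_nonpos_of_nonneg (by linarith) hlog2.le

section Entropy

variable {Ω : Type*} [Fintype Ω] {μ : Ω → ℝ} {α β γ : Type*}

lemma sum_mul_congr_of_pos (hμ : IsPMF μ) {f g : Ω → ℝ} (h : ∀ ω, 0 < μ ω → f ω = g ω) :
    ∑ ω, μ ω * f ω = ∑ ω, μ ω * g ω :=
  sum_congr rfl fun ω _ => by
    rcases (hμ.1 ω).eq_or_lt with h0 | h0
    · simp [← h0]
    · rw [h ω h0]

lemma sum_mul_le_of_pos (hμ : IsPMF μ) {f g : Ω → ℝ} (h : ∀ ω, 0 < μ ω → f ω ≤ g ω) :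
    ∑ ω, μ ω * f ω ≤ ∑ ω, μ ω * g ω :=
  sum_le_sum fun ω _ => by
    rcases (hμ.1 ω).eq_or_lt with h0 | h0
    · simp [← h0]
    · exact mul_le_mul_of_nonneg_left (h ω h0) h0.le

lemma sum_pr_mul [Fintype α] [DecidableEq α] (Z : Ω → α) (L : α → ℝ) :
    ∑ a, pr μ Z a * L a = ∑ ω, μ ω * L (Z ω) := by
  simp only [pr, sum_mul, ite_mul, zero_mul]
  rw [sum_comm]
  simp

lemma pr_nonneg (hμ : IsPMF μ) [DecidableEq α] (Z : Ω → α) (a : α) : 0 ≤ pr μ Z a :=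
  sum_nonneg fun ω _ => by split_ifs <;> simp [hμ.1 ω]

lemma sum_pr (hμ : IsPMF μ) [Fintype α] [DecidableEq α] (Z : Ω → α) : ∑ a, pr μ Z a = 1 := by
  simpa [hμ.2] using sum_pr_mul (μ := μ) Z fun _ => 1

lemma le_pr_self (hμ : IsPMF μ) [DecidableEq α] (Z : Ω → α) (ω : Ω) : μ ω ≤ pr μ Z (Z ω) := by
  unfold pr
  simpa using single_le_sum (f := fun ω' => if Z ω' = Z ω then μ ω' else 0)
    (fun ω' _ => by split_ifs <;> simp [hμ.1 ω']) (mem_univ ω)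

lemma pr_le_pr_comp (hμ : IsPMF μ) [DecidableEq α] [DecidableEq β] (Z : Ω → α) (f : α → β)
    (a : α) : pr μ Z a ≤ pr μ (fun ω => f (Z ω)) (f a) :=
  sum_le_sum fun ω _ => by
    by_cases h : Z ω = a
    · simp [h]
    · split_ifs <;> simp [hμ.1 ω]

lemma pr_comp_of_injective [DecidableEq α] [DecidableEq β] (Z : Ω → α) {f : α → β}
    (hf : Function.Injective f) (a : α) : pr μ (fun ω => f (Z ω)) (f a) = pr μ Z a := by
  simp only [pr, hf.eq_iff]

lemma entH_eq_sum [Fintype α] [DecidableEq α] (Z : Ω → α) :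
    entH μ Z = -∑ ω, μ ω * logb 2 (pr μ Z (Z ω)) := by
  rw [entH, sum_pr_mul Z fun a => logb 2 (pr μ Z a)]

lemma entH_comp_of_injective [Fintype α] [DecidableEq α] [Fintype β] [DecidableEq β]
    (Z : Ω → α) {f : α → β} (hf : Function.Injective f) :
    entH μ (fun ω => f (Z ω)) = entH μ Z := by
  simp only [entH_eq_sum, pr_comp_of_injective Z hf]

lemma entH_comp_le (hμ : IsPMF μ) [Fintype α] [DecidableEq α] [Fintype β] [DecidableEq β]
    (Z : Ω → α) (f : α → β) : entH μ (fun ω => f (Z ω)) ≤ entH μ Z := by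
  rw [entH_eq_sum, entH_eq_sum, neg_le_neg_iff]
  exact sum_mul_le_of_pos hμ fun ω hω =>
    logb_le_logb_of_le one_lt_two (hω.trans_le (le_pr_self hμ Z ω)) (pr_le_pr_comp hμ Z f _)

lemma entH_const (hμ : IsPMF μ) [Fintype α] [DecidableEq α] (c : α) :
    entH μ (fun _ : Ω => c) = 0 := by
  simp [entH_eq_sum, pr, hμ.2]

lemma sum_pr_pair_fst [Fintype α] [DecidableEq α] [DecidableEq β] (A : Ω → α) (Z : Ω → β)
    (b : β) : ∑ a, pr μ (fun ω => (A ω, Z ω)) (a, b) = pr μ Z b := by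
  simp only [pr, Prod.mk.injEq, ite_and]
  rw [sum_comm]
  simp

lemma entH_submodular (hμ : IsPMF μ) [Fintype α] [DecidableEq α] [Fintype β] [DecidableEq β]
    [Fintype γ] [DecidableEq γ] (A : Ω → α) (U : Ω → β) (Z : Ω → γ) :
    entH μ (fun ω => (A ω, U ω, Z ω)) + entH μ Z
      ≤ entH μ (fun ω => (A ω, Z ω)) + entH μ (fun ω => (U ω, Z ω)) := by
  set V := fun ω => (A ω, U ω, Z ω)
  -- the law of `A` and `U` made conditionally independent given `Z`
  let q : α × β × γ → ℝ := fun t =>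
    pr μ (fun ω => (A ω, Z ω)) (t.1, t.2.2) * pr μ (fun ω => (U ω, Z ω)) (t.2.1, t.2.2)
      / pr μ Z t.2.2
  have hq_pos : ∀ t, pr μ V t ≠ 0 → q t ≠ 0 := by
    intro t ht
    have hV := (pr_nonneg hμ V t).lt_of_ne' ht
    have hAZ := hV.trans_le (pr_le_pr_comp hμ V (fun t => (t.1, t.2.2)) t)
    have hUZ := hV.trans_le (pr_le_pr_comp hμ V (fun t => (t.2.1, t.2.2)) t)
    have hZ := hV.trans_le (pr_le_pr_comp hμ V (fun t => t.2.2) t)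
    exact (div_pos (mul_pos hAZ hUZ) hZ).ne'
  have hq_sum : ∑ t, q t = 1 :=
    calc ∑ t, q t = ∑ c, (∑ a, pr μ (fun ω => (A ω, Z ω)) (a, c))
          * (∑ b, pr μ (fun ω => (U ω, Z ω)) (b, c)) / pr μ Z c := by
          simp only [q, Fintype.sum_prod_type, sum_mul_sum, sum_div]
          exact (sum_congr rfl fun _ _ => sum_comm).trans sum_comm
      _ = 1 := by simp only [sum_pr_pair_fst, mul_self_div_self, sum_pr hμ]
  have hgibbs := sum_mul_logb_div_nonpos (pr_nonneg hμ V)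
    (fun t => div_nonneg (mul_nonneg (pr_nonneg hμ _ _) (pr_nonneg hμ _ _)) (pr_nonneg hμ _ _))
    hq_pos (by rw [hq_sum, sum_pr hμ])
  rw [sum_pr_mul V fun t => logb 2 (q t / pr μ V t),
    sum_mul_congr_of_pos hμ (g := fun ω => logb 2 (pr μ (fun ω => (A ω, Z ω)) (A ω, Z ω))
      + logb 2 (pr μ (fun ω => (U ω, Z ω)) (U ω, Z ω)) - logb 2 (pr μ Z (Z ω))
      - logb 2 (pr μ V (V ω)))] at hgibbs
  · simp only [entH_eq_sum, mul_sub, mul_add, sum_add_distrib, sum_sub_distrib] at hgibbs ⊢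
    linarith
  intro ω hω
  have hAZ := (hω.trans_le (le_pr_self hμ (fun ω => (A ω, Z ω)) ω)).ne'
  have hUZ := (hω.trans_le (le_pr_self hμ (fun ω => (U ω, Z ω)) ω)).ne'
  have hZ := (hω.trans_le (le_pr_self hμ Z ω)).ne'
  have hV := (hω.trans_le (le_pr_self hμ V ω)).ne'
  change logb 2 (pr μ (fun ω => (A ω, Z ω)) (A ω, Z ω) * pr μ (fun ω => (U ω, Z ω)) (U ω, Z ω)
    / pr μ Z (Z ω) / pr μ V (V ω)) = _
  rw [logb_div (div_ne_zero (mul_ne_zero hAZ hUZ) hZ) hV, logb_div (mul_ne_zero hAZ hUZ) hZ,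
    logb_mul hAZ hUZ]

lemma condH_nonneg (hμ : IsPMF μ) [Fintype α] [DecidableEq α] [Fintype β] [DecidableEq β]
    (X : Ω → α) (W : Ω → β) : 0 ≤ condH μ X W :=
  sub_nonneg.2 (entH_comp_le hμ (fun ω => (X ω, W ω)) Prod.snd)

lemma condH_pair_le (hμ : IsPMF μ) [Fintype α] [DecidableEq α] [Fintype β] [DecidableEq β]
    [Fintype γ] [DecidableEq γ] (A : Ω → α) (U : Ω → β) (Z : Ω → γ) :
    condH μ A (fun ω => (U ω, Z ω)) ≤ condH μ A Z := by
  have := entH_submodular hμ A U Z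
  unfold condH
  linarith

lemma condH_le_of_comp_eq (hμ : IsPMF μ) [Fintype α] [DecidableEq α] [Fintype β] [DecidableEq β]
    [Fintype γ] [DecidableEq γ] (X : Ω → α) (Z : Ω → β) {Z' : Ω → γ} (f : β → γ)
    (hZ' : ∀ ω, f (Z ω) = Z' ω) : condH μ X Z ≤ condH μ X Z' := by
  obtain rfl : (fun ω => f (Z ω)) = Z' := funext hZ'
  have hgraph : condH μ X (fun ω => (Z ω, f (Z ω))) = condH μ X Z := by
    have hinj : Function.Injective fun p : α × β => (p.1, p.2, f p.2) :=
      fun _ _ h => by simp_all [Prod.ext_iff]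
    unfold condH
    rw [entH_comp_of_injective Z (f := fun z => (z, f z)) fun _ _ h => congrArg Prod.fst h,
      entH_comp_of_injective (fun ω => (X ω, Z ω)) hinj]
  exact hgraph ▸ condH_pair_le hμ X Z fun ω => f (Z ω)

lemma condH_const (hμ : IsPMF μ) [Fintype α] [DecidableEq α] [Fintype β] [DecidableEq β]
    (X : Ω → α) (c : β) : condH μ X (fun _ => c) = entH μ X := by
  rw [condH, entH_const hμ, sub_zero,
    entH_comp_of_injective X (f := fun a => (a, c)) fun _ _ h => congrArg Prod.fst h]

lemma condH_le_entH (hμ : IsPMF μ) [Fintype α] [DecidableEq α] [Fintype β] [DecidableEq β]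
    (X : Ω → α) (W : Ω → β) : condH μ X W ≤ entH μ X :=
  (condH_le_of_comp_eq hμ X W (fun _ => ()) fun _ => rfl).trans_eq (condH_const hμ X ())

lemma entH_pair_of_indep (hμ : IsPMF μ) [Fintype α] [DecidableEq α] [Fintype β] [DecidableEq β]
    {X : Ω → α} {W : Ω → β} (h : IndepRV μ X W) :
    entH μ (fun ω => (X ω, W ω)) = entH μ X + entH μ W := by
  simp only [entH_eq_sum, ← neg_add, ← sum_add_distrib, ← mul_add]
  refine congrArg _ (sum_mul_congr_of_pos hμ fun ω hω => ?_)
  rw [h, logb_mul (hω.trans_le (le_pr_self hμ X ω)).ne' (hω.trans_le (le_pr_self hμ W ω)).ne']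

lemma condH_eq_entH_of_indep (hμ : IsPMF μ) [Fintype α] [DecidableEq α] [Fintype β]
    [DecidableEq β] {X : Ω → α} {W : Ω → β} (h : IndepRV μ X W) : condH μ X W = entH μ X := by
  rw [condH, entH_pair_of_indep hμ h, add_sub_cancel_right]

lemma condH_sub_condH_pair_comm [Fintype α] [DecidableEq α] [Fintype β] [DecidableEq β]
    [Fintype γ] [DecidableEq γ] (A : Ω → α) (X : Ω → β) (W : Ω → γ) :
    condH μ A W - condH μ A (fun ω => (X ω, W ω))
      = condH μ X W - condH μ X (fun ω => (A ω, W ω)) := by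
  have hswap : Function.Injective fun t : α × β × γ => (t.2.1, t.1, t.2.2) :=
    fun _ _ h => by simp_all [Prod.ext_iff]
  have := entH_comp_of_injective (μ := μ) (fun ω => (A ω, X ω, W ω)) hswap
  unfold condH
  linarith

lemma entH_add_condH_pair_eq (hμ : IsPMF μ) [Fintype α] [DecidableEq α] [Fintype β]
    [DecidableEq β] [Fintype γ] [DecidableEq γ] {A : Ω → α} {X : Ω → β} {W : Ω → γ}
    (hrec : condH μ X (fun ω => (A ω, W ω)) = 0) (hind : IndepRV μ X W) :
    entH μ X + condH μ A (fun ω => (X ω, W ω)) = condH μ A W := by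
  have := condH_sub_condH_pair_comm (μ := μ) A X W
  rw [hrec, condH_eq_entH_of_indep hμ hind] at this
  linarith

end Entropy

section History

variable {Ω α β δ : Type*} {n : ℕ}

def initTuple (F : Fin n → Ω → β) (k : ℕ) (hk : k ≤ n) (ω : Ω) : Fin k → β :=
  fun j => F (Fin.castLE hk j) ω

lemma initTuple_succ (F : Fin n → Ω → β) {k : ℕ} (hk : k < n) (ω : Ω) :
    initTuple F (k + 1) hk ω = Fin.snoc (initTuple F k hk.le ω) (F ⟨k, hk⟩ ω) := by
  funext j
  induction j using Fin.lastCases with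
  | last => simp only [initTuple, Fin.snoc_last]; rfl
  | cast j => simp [initTuple]

def history (Q : Ω → α) (X : Fin n → Ω → δ) (Y : Fin n → Ω → β) (k : ℕ) (hk : k ≤ n)
    (ω : Ω) : α × (Fin k → δ) × (Fin k → β) :=
  (Q ω, initTuple X k hk ω, initTuple Y k hk ω)

lemma condH_history_succ_le [Fintype Ω] {μ : Ω → ℝ} (hμ : IsPMF μ) {γ : Type*} [Fintype γ]
    [DecidableEq γ] [Fintype α] [DecidableEq α] [Fintype β] [DecidableEq β] [Fintype δ]
    [DecidableEq δ] (A : Ω → γ) (Q : Ω → α) (X : Fin n → Ω → δ) (Y : Fin n → Ω → β) {k : ℕ}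
    (hk : k < n)
    (hrec : condH μ (X ⟨k, hk⟩)
      (fun ω => (A ω, Q ω, initTuple X k hk.le ω, initTuple Y (k + 1) hk ω)) = 0)
    (hind : IndepRV μ (X ⟨k, hk⟩)
      (fun ω => (Q ω, initTuple X k hk.le ω, initTuple Y (k + 1) hk ω))) :
    entH μ (X ⟨k, hk⟩) + condH μ A (history Q X Y (k + 1) hk)
      ≤ condH μ A (history Q X Y k hk.le) := by
  set W := fun ω => (Q ω, initTuple X k hk.le ω, initTuple Y (k + 1) hk ω)
  calc entH μ (X ⟨k, hk⟩) + condH μ A (history Q X Y (k + 1) hk)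
      ≤ entH μ (X ⟨k, hk⟩) + condH μ A (fun ω => (X ⟨k, hk⟩ ω, W ω)) := by
        gcongr
        refine condH_le_of_comp_eq hμ A _
          (fun h => (h.2.1 (Fin.last k), h.1, Fin.init h.2.1, h.2.2)) fun ω => ?_
        simp [history, W, initTuple_succ X hk]
    _ = condH μ A W := entH_add_condH_pair_eq hμ hrec hind
    _ ≤ condH μ A (history Q X Y k hk.le) := by
        refine condH_le_of_comp_eq hμ A W (fun w => (w.1, w.2.1, Fin.init w.2.2)) fun ω => ?_
        simp [history, W, initTuple_succ Y hk]

end History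

/-- if for each `i`, `H(X_i | A, Q, X_0, ..., X_{i-1}, Y_0, ..., Y_i) = 0`
and `X_i` is independent of `(Q, X_0, ..., X_{i-1}, Y_0, ..., Y_i)`, then
`H(A) ≥ ∑_{i=0}^{n-1} H(X_i)`. -/
theorem stmt8 {Ω α β γ δ : Type*} [Fintype Ω]
    [Fintype α] [DecidableEq α] [Fintype β] [DecidableEq β]
    [Fintype γ] [DecidableEq γ] [Fintype δ] [DecidableEq δ]
    (n : ℕ) (μ : Ω → ℝ) (hμ : IsPMF μ)
    (A : Ω → γ) (Q : Ω → α) (X : Fin n → Ω → δ) (Y : Fin n → Ω → β)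
    (hrec : ∀ i : Fin n,
      condH μ (X i) (fun ω =>
        (A ω, Q ω,
         fun j : Fin i.val => X (Fin.castLE i.isLt.le j) ω,
         fun j : Fin (i.val + 1) => Y (Fin.castLE i.isLt j) ω)) = 0)
    (hind : ∀ i : Fin n,
      IndepRV μ (X i) (fun ω =>
        (Q ω,
         fun j : Fin i.val => X (Fin.castLE i.isLt.le j) ω,
         fun j : Fin (i.val + 1) => Y (Fin.castLE i.isLt j) ω))) :
    entH μ A ≥ ∑ i : Fin n, entH μ (X i) := by
  have hchain : ∀ k (hk : k ≤ n),
      ∑ i : Fin k, entH μ (X (Fin.castLE hk i)) + condH μ A (history Q X Y k hk) ≤ entH μ A := by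
    intro k
    induction k with
    | zero => simpa using condH_le_entH hμ A _
    | succ k ih =>
      intro hk
      have hstep := condH_history_succ_le hμ A Q X Y hk (hrec ⟨k, hk⟩) (hind ⟨k, hk⟩)
      rw [Fin.sum_univ_castSucc]
      simp only [Fin.castLE_castSucc, show Fin.castLE hk (Fin.last k) = ⟨k, hk⟩ from rfl]
      linarith [ih (Nat.le_of_succ_le hk)]
  have := hchain n le_rfl
  simp only [Fin.castLE_rfl, id] at this
  linarith [condH_nonneg hμ A (history Q X Y n le_rfl)]
end

section
/- Let X_{W'}, X_{W''}, Z be independent uniform random variables over F_{q^m} and let c'_W X_W, etc., be as follows: Y' = c'_W X_W + c'_{W'} X_{W'} + c' Z and Y'' = c''_{W''} X_{W''} + c'' (c_{W'} X_{W'} + Z), where all coefficients are nonzero elements of F_q and X_W is independent uniform as well. Then H(X_{W'} | Y', Y'') = H(X_{W'}) and H(X_{W''} | X_{W'}, Y', Y'') = H(X_{W''}). -/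
open scoped BigOperators

/-!
The map `ω ↦ (X_{W''}, X_{W'}, Y', Y'')` is a bijection of `F⁴`: from `X_{W''}`, `X_{W'}` and
`Y''` one recovers `Z` because `c'' ≠ 0`, and then `X_W` from `Y'` because `c'_W ≠ 0`. Hence this
quadruple, and with it `(X_{W'}, Y', Y'')`, is uniformly distributed. For a pair `(X, Y)` uniform
on `α × β` both marginals are uniform, so `H(X, Y) - H(Y) = log |α| = H(X)`.
-/

open Function

section UniformRV

variable {Ω α β : Type*} [Fintype Ω] [DecidableEq α] [DecidableEq β] {μ : Ω → ℝ}

def IsUniformRV [Fintype α] (μ : Ω → ℝ) (V : Ω → α) : Prop :=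
  ∀ a, pr μ V a = 1 / (Fintype.card α : ℝ)

lemma isUniformRV_of_bijective [Fintype α] (hμ : ∀ ω, μ ω = 1 / (Fintype.card Ω : ℝ))
    {V : Ω → α} (hV : Bijective V) : IsUniformRV μ V := by
  intro a
  obtain ⟨ω₀, hω₀⟩ := hV.2 a
  have hfiber : ∀ ω, V ω = a ↔ ω = ω₀ := fun ω => by
    rw [← hω₀]; exact hV.1.eq_iff
  classical
  simp only [pr, hfiber, hμ, Finset.sum_ite_eq', Finset.mem_univ, if_true]
  rw [Fintype.card_of_bijective hV]

lemma pr_eq_sum_pr_prod [Fintype β] (V : Ω → α) (W : Ω → β) (a : α) :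
    pr μ V a = ∑ b, pr μ (fun ω => (V ω, W ω)) (a, b) := by
  simp only [pr, Prod.mk.injEq]
  rw [Finset.sum_comm]
  refine Finset.sum_congr rfl fun ω _ => ?_
  by_cases hV : V ω = a <;> simp [hV]

variable [Fintype α] [Fintype β]

lemma IsUniformRV.fst [Nonempty β] {V : Ω → α} {W : Ω → β}
    (h : IsUniformRV μ fun ω => (V ω, W ω)) : IsUniformRV μ V := by
  intro a
  rw [pr_eq_sum_pr_prod V W a, Finset.sum_congr rfl fun b _ => h (a, b)]
  simp only [Finset.sum_const, Finset.card_univ, Fintype.card_prod, nsmul_eq_mul,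
    Nat.cast_mul]
  have : (Fintype.card β : ℝ) ≠ 0 := by positivity
  field_simp

lemma IsUniformRV.swap {V : Ω → α} {W : Ω → β} (h : IsUniformRV μ fun ω => (V ω, W ω)) :
    IsUniformRV μ fun ω => (W ω, V ω) := by
  intro p
  have hfiber : ∀ ω, (W ω, V ω) = p ↔ (V ω, W ω) = p.swap := fun ω => by
    rw [← Prod.swap_inj, Prod.swap_prod_mk]
  simp only [pr, hfiber]
  rw [← pr, h, Fintype.card_prod, Fintype.card_prod, mul_comm]

lemma IsUniformRV.snd [Nonempty α] {V : Ω → α} {W : Ω → β}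
    (h : IsUniformRV μ fun ω => (V ω, W ω)) : IsUniformRV μ W :=
  h.swap.fst

lemma entH_eq_logb_card {V : Ω → α} (h : IsUniformRV μ V) :
    entH μ V = Real.logb 2 (Fintype.card α) := by
  simp only [entH, h _, Finset.sum_const, Finset.card_univ, nsmul_eq_mul, one_div,
    Real.logb_inv]
  rcases Nat.eq_zero_or_pos (Fintype.card α) with hα | hα
  · simp [hα]
  · field_simp

lemma condH_eq_entH_of_isUniformRV [Nonempty α] [Nonempty β] {X : Ω → α} {Y : Ω → β}
    (h : IsUniformRV μ fun ω => (X ω, Y ω)) : condH μ X Y = entH μ X := by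
  rw [condH, entH_eq_logb_card h, entH_eq_logb_card h.snd, entH_eq_logb_card h.fst,
    Fintype.card_prod, Nat.cast_mul, Real.logb_mul (by positivity) (by positivity)]
  ring

end UniformRV

theorem stmt10_general {F : Type*} [Field F] [Fintype F] [DecidableEq F]
    (c'W c'W' c' c''W'' c'' cW' : F)
    (h1 : c'W ≠ 0)
    (h5 : c'' ≠ 0)
    (μ : F × F × F × F → ℝ)
    (hμ : ∀ ω, μ ω = 1 / (Fintype.card (F × F × F × F) : ℝ))
    (XW XW' XW'' Z : F × F × F × F → F)
    (hXW : ∀ ω, XW ω = ω.1) (hXW' : ∀ ω, XW' ω = ω.2.1)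
    (hXW'' : ∀ ω, XW'' ω = ω.2.2.1) (hZ : ∀ ω, Z ω = ω.2.2.2)
    (Y' Y'' : F × F × F × F → F)
    (hY' : ∀ ω, Y' ω = c'W * XW ω + c'W' * XW' ω + c' * Z ω)
    (hY'' : ∀ ω, Y'' ω = c''W'' * XW'' ω + c'' * (cW' * XW' ω + Z ω)) :
    condH μ XW' (fun ω => (Y' ω, Y'' ω)) = entH μ XW' ∧
    condH μ XW'' (fun ω => (XW' ω, Y' ω, Y'' ω)) = entH μ XW'' := by
  have hinj : Injective fun ω => (XW'' ω, XW' ω, Y' ω, Y'' ω) := by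
    rintro ⟨w, w', w'', z⟩ ⟨v, v', v'', u⟩ h
    simp only [hXW, hXW', hXW'', hZ, hY', hY'', Prod.mk.injEq] at h
    obtain ⟨rfl, rfl, hY'eq, hY''eq⟩ := h
    obtain rfl : z = u := by simpa [h5] using hY''eq
    obtain rfl : w = v := by simpa [h1] using hY'eq
    rfl
  have hunif := isUniformRV_of_bijective hμ hinj.bijective_of_finite
  exact ⟨condH_eq_entH_of_isUniformRV hunif.snd, condH_eq_entH_of_isUniformRV hunif⟩

/-- with `X_W, X_{W'}, X_{W''}, Z` independent uniform on `F_{q^m}`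
(modelled as the four coordinates of a uniform point of `F × F × F × F`),
`Y' = c'_W X_W + c'_{W'} X_{W'} + c' Z` and
`Y'' = c''_{W''} X_{W''} + c'' (c_{W'} X_{W'} + Z)` with all coefficients nonzero,
we have `H(X_{W'} | Y', Y'') = H(X_{W'})` and
`H(X_{W''} | X_{W'}, Y', Y'') = H(X_{W''})`. -/
theorem stmt10 {F : Type*} [Field F] [Fintype F] [DecidableEq F]
    (c'W c'W' c' c''W'' c'' cW' : F)
    (h1 : c'W ≠ 0) (h2 : c'W' ≠ 0) (h3 : c' ≠ 0)
    (h4 : c''W'' ≠ 0) (h5 : c'' ≠ 0) (h6 : cW' ≠ 0)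
    (μ : F × F × F × F → ℝ)
    (hμ : ∀ ω, μ ω = 1 / (Fintype.card (F × F × F × F) : ℝ))
    (XW XW' XW'' Z : F × F × F × F → F)
    (hXW : ∀ ω, XW ω = ω.1) (hXW' : ∀ ω, XW' ω = ω.2.1)
    (hXW'' : ∀ ω, XW'' ω = ω.2.2.1) (hZ : ∀ ω, Z ω = ω.2.2.2)
    (Y' Y'' : F × F × F × F → F)
    (hY' : ∀ ω, Y' ω = c'W * XW ω + c'W' * XW' ω + c' * Z ω)
    (hY'' : ∀ ω, Y'' ω = c''W'' * XW'' ω + c'' * (cW' * XW' ω + Z ω)) :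
    condH μ XW' (fun ω => (Y' ω, Y'' ω)) = entH μ XW' ∧
    condH μ XW'' (fun ω => (XW' ω, Y' ω, Y'' ω)) = entH μ XW'' :=
  stmt10_general c'W c'W' c' c''W'' c'' cW' h1 h5 μ hμ XW XW' XW'' Z hXW hXW' hXW'' hZ Y' Y'' hY'
    hY''
end

section
/- Let K ≥ 2. For the Case-2 protocol distribution: S is a uniformly random M-subset of [K] (3 ≤ M, 2M ≤ K), W is uniform on S, r ∈ {M-2, M-1} is drawn with P(r = M-2) = 2(M-1)/K, Q1 = S \ {W}, and Q2 is a uniformly random (M-1)-subset of ({W} ∪ ([K] \ S)) containing W iff r = M-2 and with all remaining elements drawn uniformly from [K] \ S. Then for the unordered pair Q = {Q1, Q2}, the conditional probability P(Q | W = W') is the same for all W' ∈ [K]; consequently W is independent of Q. -/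
/-
Write a sample point as `(insert W A, W, B)` with `W ∉ A`, so that `Q = {A, B}`. It has positive
mass only when `A`, `B` are disjoint `(M - 1)`-sets, and then its mass is `c * hitWeight` if
`W ∈ B` and `c * missWeight` if `W ∉ B`, where `c = 1 / (C(K, M) M)`. Since `Q` forgets the
order, `P(Q = {A, B}, W = w)` adds the masses of `(A, B)` and `(B, A)`: this is `c * hitWeight`
when `w ∈ A ∪ B` and `2 * c * missWeight` otherwise. Pascal's rule
`C(K-M, M-1) (M-1) = C(K-M, M-2) (K-2M+2)` makes these equal. Independence then only needs the
total mass to be `1`.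
-/

open Finset

section General

variable {α R : Type*} [DecidableEq α]

lemma sum_powersetCard_succ_insert_ite [AddCommMonoid R] {a : α} {s : Finset α} (ha : a ∉ s)
    (k : ℕ) (x y : R) :
    ∑ t ∈ (insert a s).powersetCard (k + 1), (if a ∈ t then x else y)
      = (#s).choose k • x + (#s).choose (k + 1) • y := by
  have hnot : ∀ t ∈ s.powersetCard (k + 1), a ∉ t := fun t ht =>
    notMem_mono (mem_powersetCard.1 ht).1 ha
  rw [powersetCard_succ_insert ha, sum_union, sum_image, add_comm]
  · rw [sum_congr rfl fun t ht => if_neg (hnot t ht),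
      sum_congr rfl fun t _ => if_pos (mem_insert_self a t), sum_const, sum_const,
      card_powersetCard, card_powersetCard]
  · intro t ht u hu htu
    rw [← erase_insert (notMem_mono (mem_powersetCard.1 ht).1 ha), htu,
      erase_insert (notMem_mono (mem_powersetCard.1 hu).1 ha)]
  · exact disjoint_left.2 fun t ht hti => by
      obtain ⟨u, -, rfl⟩ := mem_image.1 hti
      exact hnot _ ht (mem_insert_self a u)

lemma ite_add_ite_eq_of_disjoint [AddMonoid R] {s t : Finset α} (hst : Disjoint s t) {x y : R}
    (hxy : x = y + y) (a : α) :
    ((if a ∈ s then 0 else if a ∈ t then x else y) + if a ∈ t then 0 else if a ∈ s then x else y)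
      = x := by
  by_cases has : a ∈ s
  · simp [has, disjoint_left.1 hst has]
  · by_cases hat : a ∈ t <;> simp [has, hat, hxy]

variable [Fintype α]

lemma sum_finset_eq_sum_ite_insert [AddCommMonoid R] (a : α) {g : Finset α → R}
    (hg : ∀ S, a ∉ S → g S = 0) :
    ∑ S, g S = ∑ A, if a ∈ A then 0 else g (insert a A) := by
  have hpow := fun f : Finset α → R => sum_powerset_insert (notMem_erase a (univ : Finset α)) f
  rw [insert_erase (mem_univ a), powerset_univ] at hpow
  rw [hpow, hpow,
    sum_eq_zero fun S hS => hg S (notMem_mono (mem_powerset.1 hS) (notMem_erase a _))]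
  simp only [mem_insert_self, if_true, sum_const_zero, zero_add, add_zero]
  refine sum_congr rfl fun A hA => ?_
  rw [if_neg (notMem_mono (mem_powerset.1 hA) (notMem_erase a _))]

lemma sum_sum_ite_pair_eq_of_add_swap_eq {R : Type*} [AddCommGroup R] [IsAddTorsionFree R]
    {φ ψ : α → α → R} (h : ∀ A B, φ A B + φ B A = ψ A B + ψ B A) (q : Finset α) :
    ∑ A, ∑ B, (if {A, B} = q then φ A B else 0) = ∑ A, ∑ B, if {A, B} = q then ψ A B else 0 := by
  have hswap : ∀ χ : α → α → R, ∑ A, ∑ B, (if {A, B} = q then χ A B else 0)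
      = ∑ A, ∑ B, if {A, B} = q then χ B A else 0 := fun χ => by
    rw [sum_comm]; simp only [pair_comm]
  have hsymm : ∀ χ : α → α → R, 2 • ∑ A, ∑ B, (if {A, B} = q then χ A B else 0)
      = ∑ A, ∑ B, if {A, B} = q then χ A B + χ B A else 0 := fun χ => by
    rw [two_nsmul]
    nth_rewrite 2 [hswap]
    simp only [← sum_add_distrib, ite_add_ite, add_zero]
  apply nsmul_right_injective two_ne_zero
  simp only [hsymm, h]

end General

lemma sum_sum_ite_eq_sum {Ω β R : Type*} [Fintype Ω] [Fintype β] [DecidableEq β]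
    [AddCommMonoid R] (f : Ω → R) (g : Ω → β) :
    ∑ b, ∑ ω, (if g ω = b then f ω else 0) = ∑ ω, f ω := by
  rw [sum_comm]
  simp only [sum_ite_eq, mem_univ, if_true]

lemma joint_eq_mul_marginals {Ω ι β R : Type*} [Fintype Ω] [Fintype ι] [DecidableEq ι]
    [Fintype β] [DecidableEq β] [CommSemiring R] (μ : Ω → R) (Q : Ω → β) (W : Ω → ι)
    (hμ : ∑ ω, μ ω = 1)
    (h : ∀ q w w', (∑ ω, if Q ω = q ∧ W ω = w then μ ω else 0)
      = ∑ ω, if Q ω = q ∧ W ω = w' then μ ω else 0) (q : β) (w : ι) :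
    (∑ ω, if Q ω = q ∧ W ω = w then μ ω else 0)
      = (∑ ω, if Q ω = q then μ ω else 0) * ∑ ω, if W ω = w then μ ω else 0 := by
  have hQ : (∑ ω, if Q ω = q then μ ω else 0)
      = Fintype.card ι * ∑ ω, if Q ω = q ∧ W ω = w then μ ω else 0 := by
    rw [← sum_sum_ite_eq_sum _ W]
    simp only [← ite_and, and_comm (a := W _ = _)]
    rw [sum_congr rfl fun w' _ => h q w' w, sum_const, card_univ, nsmul_eq_mul]
  have hW : ∀ w', (∑ ω, if W ω = w' then μ ω else 0)
      = ∑ q, ∑ ω, if Q ω = q ∧ W ω = w' then μ ω else 0 := fun w' => by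
    rw [← sum_sum_ite_eq_sum _ Q]
    simp only [ite_and]
  have hWunif : Fintype.card ι * (∑ ω, if W ω = w then μ ω else 0) = 1 := by
    rw [← hμ, ← sum_sum_ite_eq_sum μ W, ← nsmul_eq_mul, ← card_univ, ← sum_const]
    refine sum_congr rfl fun w' _ => ?_
    rw [hW, hW]
    exact sum_congr rfl fun q _ => h q w w'
  rw [hQ, mul_right_comm, hWunif, one_mul]

namespace PirCsiCaseTwo

variable (K M : ℕ)

noncomputable def hitWeight : ℝ :=
  (2 * ((M : ℝ) - 1) / K) * (1 / ((K - M).choose (M - 2) : ℝ))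

noncomputable def missWeight : ℝ :=
  (1 - 2 * ((M : ℝ) - 1) / K) * (1 / ((K - M).choose (M - 1) : ℝ))

noncomputable def pmf : Finset (Fin K) × Fin K × Finset (Fin K) → ℝ
  | (S, w, Q2) =>
    if #S = M ∧ w ∈ S ∧ #Q2 = M - 1 ∧ Q2 ⊆ insert w (univ \ S) then
      (1 / (K.choose M : ℝ)) * (1 / (M : ℝ)) * (if w ∈ Q2 then hitWeight K M else missWeight K M)
    else 0

variable {K M}

lemma choose_ne_zero_of_two_mul_le (hM : 2 ≤ M) (hK : 2 * M ≤ K + 1) :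
    ((K - M).choose (M - 2) : ℝ) ≠ 0 ∧ ((K - M).choose (M - 1) : ℝ) ≠ 0 :=
  ⟨Nat.cast_ne_zero.2 (Nat.choose_pos (by omega)).ne',
    Nat.cast_ne_zero.2 (Nat.choose_pos (by omega)).ne'⟩

lemma hitWeight_eq_missWeight_add_missWeight (hM : 2 ≤ M) (hK : 2 * M ≤ K + 1) :
    hitWeight K M = missWeight K M + missWeight K M := by
  obtain ⟨h2, h1⟩ := choose_ne_zero_of_two_mul_le hM hK
  have hK0 : (K : ℝ) ≠ 0 := Nat.cast_ne_zero.2 (by omega)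
  have hpascal : ((K - M).choose (M - 1) : ℝ) * ((M : ℝ) - 1)
      = ((K - M).choose (M - 2) : ℝ) * ((K : ℝ) - 2 * M + 2) := by
    have h := Nat.choose_succ_right_eq (K - M) (M - 2)
    rw [show M - 2 + 1 = M - 1 by omega, show K - M - (M - 2) = K + 2 - 2 * M by omega] at h
    have h' := congrArg (Nat.cast : ℕ → ℝ) h
    push_cast [Nat.cast_sub (show 1 ≤ M by omega),
      Nat.cast_sub (show 2 * M ≤ K + 2 by omega)] at h'
    linear_combination h'
  unfold hitWeight missWeight
  field_simp
  linear_combination 2 * hpascal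

lemma choose_mul_hitWeight_add_choose_mul_missWeight (hM : 2 ≤ M) (hK : 2 * M ≤ K + 1) :
    ((K - M).choose (M - 2) : ℝ) * hitWeight K M + ((K - M).choose (M - 1) : ℝ) * missWeight K M
      = 1 := by
  obtain ⟨h2, h1⟩ := choose_ne_zero_of_two_mul_le hM hK
  unfold hitWeight missWeight
  field_simp
  ring

lemma sum_pmf_of_mem (hM : 2 ≤ M) (hK : 2 * M ≤ K + 1) {S : Finset (Fin K)} (hS : #S = M)
    {w : Fin K} (hw : w ∈ S) :
    ∑ Q2, pmf K M (S, w, Q2) = (1 / (K.choose M : ℝ)) * (1 / (M : ℝ)) := by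
  have hwS : w ∉ univ \ S := fun h => (mem_sdiff.1 h).2 hw
  have hcard : #(univ \ S) = K - M := by rw [card_univ_sdiff, hS, Fintype.card_fin]
  have hfilter : ({Q2 | #Q2 = M - 1 ∧ Q2 ⊆ insert w (univ \ S)} : Finset (Finset (Fin K)))
      = (insert w (univ \ S)).powersetCard (M - 2 + 1) := by
    ext Q2
    rw [mem_filter, mem_powersetCard, show M - 2 + 1 = M - 1 by omega]
    simp only [mem_univ, true_and, and_comm]
  simp only [pmf, hS, hw, true_and]
  rw [← sum_filter, hfilter, ← mul_sum, sum_powersetCard_succ_insert_ite hwS, hcard,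
    show M - 2 + 1 = M - 1 by omega, nsmul_eq_mul, nsmul_eq_mul,
    choose_mul_hitWeight_add_choose_mul_missWeight hM hK, mul_one]

lemma sum_pmf_eq_one (hM : 2 ≤ M) (hK : 2 * M ≤ K + 1) : ∑ ω, pmf K M ω = 1 := by
  have hfiber : ∀ S w, ∑ Q2, pmf K M (S, w, Q2)
      = if #S = M ∧ w ∈ S then (1 / (K.choose M : ℝ)) * (1 / (M : ℝ)) else 0 := by
    intro S w
    split_ifs with h
    · exact sum_pmf_of_mem hM hK h.1 h.2
    · exact sum_eq_zero fun Q2 _ => if_neg fun h' => h ⟨h'.1, h'.2.1⟩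
  have hchoose : (K.choose M : ℝ) ≠ 0 := Nat.cast_ne_zero.2 (Nat.choose_pos (by omega)).ne'
  have hM0 : (M : ℝ) ≠ 0 := Nat.cast_ne_zero.2 (by omega)
  simp only [Fintype.sum_prod_type, hfiber, ite_and, sum_ite_irrel, sum_ite_mem, univ_inter,
    sum_const, smul_zero]
  rw [← sum_filter, ← powerset_univ, ← powersetCard_eq_filter,
    sum_congr rfl fun S hS => congrArg (· • _) (mem_powersetCard.1 hS).2, sum_const,
    card_powersetCard, card_univ, Fintype.card_fin, nsmul_eq_mul, nsmul_eq_mul]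
  field_simp

lemma pmf_eq_zero_of_notMem {S : Finset (Fin K)} {w : Fin K} (hw : w ∉ S)
    (Q2 : Finset (Fin K)) :
    pmf K M (S, w, Q2) = 0 :=
  if_neg fun h => hw h.2.1

lemma ite_mem_pmf_insert (hM : 1 ≤ M) (w : Fin K) (A B : Finset (Fin K)) :
    (if w ∈ A then 0 else pmf K M (insert w A, w, B))
      = if #A = M - 1 ∧ #B = M - 1 ∧ Disjoint A B then
          (1 / (K.choose M : ℝ)) * (1 / (M : ℝ)) *
            (if w ∈ A then 0 else if w ∈ B then hitWeight K M else missWeight K M)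
        else 0 := by
  by_cases hw : w ∈ A
  · simp [hw]
  have hcond : (#(insert w A) = M ∧ w ∈ insert w A ∧ #B = M - 1 ∧
      B ⊆ insert w (univ \ insert w A)) ↔ (#A = M - 1 ∧ #B = M - 1 ∧ Disjoint A B) := by
    rw [← compl_eq_univ_sdiff, insert_compl_insert hw, subset_compl_iff_disjoint_left,
      card_insert_of_notMem hw]
    simp only [mem_insert_self, true_and]
    constructor <;> rintro ⟨h1, h2⟩ <;> exact ⟨by omega, h2⟩
  simp only [hw, if_false, pmf, hcond]

lemma pmf_add_swap (hM : 2 ≤ M) (hK : 2 * M ≤ K + 1) (w : Fin K) (A B : Finset (Fin K)) :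
    ((if w ∈ A then 0 else pmf K M (insert w A, w, B))
      + if w ∈ B then 0 else pmf K M (insert w B, w, A))
      = if #A = M - 1 ∧ #B = M - 1 ∧ Disjoint A B then
          (1 / (K.choose M : ℝ)) * (1 / (M : ℝ)) * hitWeight K M
        else 0 := by
  have hsymm : (#B = M - 1 ∧ #A = M - 1 ∧ Disjoint B A)
      ↔ (#A = M - 1 ∧ #B = M - 1 ∧ Disjoint A B) := by
    rw [disjoint_comm, and_left_comm]
  rw [ite_mem_pmf_insert (by omega), ite_mem_pmf_insert (by omega)]
  simp only [hsymm]
  by_cases h : #A = M - 1 ∧ #B = M - 1 ∧ Disjoint A B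
  · rw [if_pos h, if_pos h, if_pos h, ← mul_add,
      ite_add_ite_eq_of_disjoint h.2.2 (hitWeight_eq_missWeight_add_missWeight hM hK)]
  · rw [if_neg h, if_neg h, if_neg h, add_zero]

lemma joint_eq_sum_sum (q : Finset (Finset (Fin K))) (w : Fin K) :
    (∑ ω, if {ω.1.erase ω.2.1, ω.2.2} = q ∧ ω.2.1 = w then pmf K M ω else 0)
      = ∑ A, ∑ B,
          if {A, B} = q then (if w ∈ A then 0 else pmf K M (insert w A, w, B)) else 0 := by
  simp only [Fintype.sum_prod_type]
  rw [sum_congr rfl fun S _ => sum_eq_single w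
      (fun w' _ hw' => sum_eq_zero fun Q2 _ => if_neg fun h => hw' h.2) (by simp),
    sum_finset_eq_sum_ite_insert w fun S hw => sum_eq_zero fun Q2 _ => by
      rw [pmf_eq_zero_of_notMem hw, ite_self]]
  refine sum_congr rfl fun A _ => ?_
  by_cases hw : w ∈ A
  · simp [hw]
  · simp only [hw, if_false, erase_insert hw, and_true]

lemma joint_eq_joint (hM : 2 ≤ M) (hK : 2 * M ≤ K + 1) (q : Finset (Finset (Fin K)))
    (w w' : Fin K) :
    (∑ ω, if {ω.1.erase ω.2.1, ω.2.2} = q ∧ ω.2.1 = w then pmf K M ω else 0)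
      = ∑ ω, if {ω.1.erase ω.2.1, ω.2.2} = q ∧ ω.2.1 = w' then pmf K M ω else 0 := by
  rw [joint_eq_sum_sum, joint_eq_sum_sum]
  exact sum_sum_ite_pair_eq_of_add_swap_eq (fun A B => by
    rw [pmf_add_swap hM hK, pmf_add_swap hM hK]) q

end PirCsiCaseTwo

/-- privacy of Case 2 of the PIR-CSI--II protocol.
Sample space: triples `(S, W, Q2)`.  The pmf `μ` encodes: `S` uniform over
`M`-subsets of `[K]`, `W` uniform on `S`, and `Q2` an `(M-1)`-subset of
`{W} ∪ ([K] \ S)`; with probability `2(M-1)/K` (the case `r = M-2`) `Q2` contains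
`W` together with `M-2` uniformly random elements of `[K] \ S`, and with
probability `1 - 2(M-1)/K` (the case `r = M-1`) `Q2` consists of `M-1` uniformly
random elements of `[K] \ S`.  With `Q1 = S \ {W}` and query the unordered pair
`Q = {Q1, Q2}`, the conditional probability `P(Q = q | W = W')` is the same for
all `W'`; consequently `W` and `Q` are independent. -/
theorem stmt16 (K M : ℕ) (hM : 3 ≤ M) (hK : 2 * M ≤ K)
    (μ : Finset (Fin K) × Fin K × Finset (Fin K) → ℝ)
    (hμ : ∀ S w Q2, μ (S, w, Q2) =
      if S.card = M ∧ w ∈ S ∧ Q2.card = M - 1 ∧ Q2 ⊆ insert w (Finset.univ \ S) then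
        (1 / (K.choose M : ℝ)) * (1 / (M : ℝ)) *
          (if w ∈ Q2 then
              (2 * ((M : ℝ) - 1) / K) * (1 / ((K - M).choose (M - 2) : ℝ))
            else
              (1 - 2 * ((M : ℝ) - 1) / K) * (1 / ((K - M).choose (M - 1) : ℝ)))
      else 0)
    (Qf : Finset (Fin K) × Fin K × Finset (Fin K) → Finset (Finset (Fin K)))
    (hQf : ∀ ω, Qf ω = {ω.1.erase ω.2.1, ω.2.2}) :
    (∀ (q : Finset (Finset (Fin K))) (w' w'' : Fin K),
      (∑ ω, if Qf ω = q ∧ ω.2.1 = w' then μ ω else 0)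
        = (∑ ω, if Qf ω = q ∧ ω.2.1 = w'' then μ ω else 0)) ∧
    (∀ (q : Finset (Finset (Fin K))) (w' : Fin K),
      (∑ ω, if Qf ω = q ∧ ω.2.1 = w' then μ ω else 0)
        = (∑ ω, if Qf ω = q then μ ω else 0) *
          (∑ ω, if ω.2.1 = w' then μ ω else 0)) := by
  have hpmf : μ = PirCsiCaseTwo.pmf K M := funext fun ⟨S, w, Q2⟩ => hμ S w Q2
  have hQ : Qf = fun ω => {ω.1.erase ω.2.1, ω.2.2} := funext hQf
  subst hpmf hQ
  have hM' : 2 ≤ M := by omega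
  have hK' : 2 * M ≤ K + 1 := by omega
  have hindep := PirCsiCaseTwo.joint_eq_joint hM' hK'
  exact ⟨hindep, joint_eq_mul_marginals _ _ _ (PirCsiCaseTwo.sum_pmf_eq_one hM' hK') hindep⟩
end
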